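/- arXiv:math/9911143 — 4 statements merged into one kernel-verified Lean document; each statement's English description precedes it below -/
import Mathlib

section
/- Let X be a compact metric space, f : X → X continuous, and X̄ the inverse limit with induced homeomorphism f̄. Suppose there exist l ∈ ℕ and ε > 0 such that for all x, y ∈ X with f^l(x) ≠ f^l(y) there is K ≥ 0 with d(f^K(x), f^K(y)) ≥ ε. Then f̄ is expansive on X̄ with the metric d̄(x,y) = Σ d(x_i,y_i)/2^i, i.e. there exists ε' > 0 such that for all distinct x, y ∈ X̄ there exists n ∈ ℤ with d̄(f̄^n(x), f̄^n(y)) ≥ ε'. -/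
/-- The inverse limit of a self-map `f : X → X`. -/
def InvLim {X : Type*} (f : X → X) : Type _ :=
  {x : ℕ → X // ∀ n, f (x (n + 1)) = x n}

/-- The shift homeomorphism (as a bijection) `f̄(x₀,x₁,…) = (f(x₀),x₀,x₁,…)`
on the inverse limit, with inverse `(x₀,x₁,…) ↦ (x₁,x₂,…)`. -/
def shiftEquiv {X : Type*} (f : X → X) : Equiv.Perm (InvLim f) where
  toFun x := ⟨fun n => Nat.casesOn n (f (x.1 0)) (fun k => x.1 k), by
    intro n
    cases n with
    | zero => rfl
    | succ k => exact x.2 k⟩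
  invFun x := ⟨fun n => x.1 (n + 1), fun n => x.2 (n + 1)⟩
  left_inv x := Subtype.ext (funext fun _ => rfl)
  right_inv x := Subtype.ext (funext fun n => by
    cases n with
    | zero => exact x.2 0
    | succ k => rfl)

/-- The metric `d̄(x,y) = Σ d(x_i,y_i)/2^i` on the inverse limit. -/
noncomputable def Dbar {X : Type*} [PseudoMetricSpace X] (f : X → X)
    (x y : InvLim f) : ℝ :=
  ∑' i : ℕ, dist (x.1 i) (y.1 i) / 2 ^ i

/-!
Two distinct points of the inverse limit differ in some coordinate `m`, hence
`f^l(x_{m+l}) = x_m ≠ y_m = f^l(y_{m+l})`. The hypothesis then yields `K` with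
`d(f^K x_{m+l}, f^K y_{m+l}) ≥ ε`, and `f^K x_{m+l}` is the zeroth coordinate of
`f̄^(K - m - l) x`. Since `X` is bounded, `d̄` is a convergent series dominating its
zeroth term, so `ε' = ε` works.
-/

namespace InvLim

variable {X : Type*} {f : X → X}

lemma coord_eq_iterate (x : InvLim f) (j k : ℕ) : x.1 j = f^[k] (x.1 (j + k)) := by
  induction k with
  | zero => rfl
  | succ k ih => rw [← add_assoc, Function.iterate_succ_apply, x.2 (j + k), ih]

lemma exists_coord_ne {x y : InvLim f} (hxy : x ≠ y) : ∃ m, x.1 m ≠ y.1 m := by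
  by_contra! h
  exact hxy (Subtype.ext (funext h))

end InvLim

section Shift

variable {X : Type*} (f : X → X)

lemma shiftEquiv_pow_apply_zero (n : ℕ) (x : InvLim f) :
    ((shiftEquiv f ^ n) x).1 0 = f^[n] (x.1 0) := by
  induction n generalizing x with
  | zero => rfl
  | succ k ih =>
    rw [pow_succ, Equiv.Perm.mul_apply, ih, Function.iterate_succ_apply]
    rfl

lemma shiftEquiv_inv_pow_apply (m : ℕ) (x : InvLim f) (i : ℕ) :
    (((shiftEquiv f)⁻¹ ^ m) x).1 i = x.1 (i + m) := by
  induction m generalizing x i with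
  | zero => rfl
  | succ k ih =>
    rw [pow_succ', Equiv.Perm.mul_apply]
    exact (ih _ (i + 1)).trans (by rw [add_right_comm, add_assoc])

lemma shiftEquiv_zpow_sub_apply_zero (K m : ℕ) (x : InvLim f) :
    ((shiftEquiv f ^ ((K : ℤ) - m)) x).1 0 = f^[K] (x.1 m) := by
  rw [sub_eq_add_neg, zpow_add, zpow_natCast, zpow_neg, zpow_natCast, ← inv_pow,
    Equiv.Perm.mul_apply, shiftEquiv_pow_apply_zero, shiftEquiv_inv_pow_apply, zero_add]

lemma exists_le_dist_shiftEquiv_zpow_apply_zero [PseudoMetricSpace X] {l : ℕ} {ε : ℝ}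
    (hexp : ∀ x y : X, f^[l] x ≠ f^[l] y → ∃ K : ℕ, ε ≤ dist (f^[K] x) (f^[K] y))
    {x y : InvLim f} (hxy : x ≠ y) :
    ∃ n : ℤ, ε ≤ dist (((shiftEquiv f ^ n) x).1 0) (((shiftEquiv f ^ n) y).1 0) := by
  obtain ⟨m, hm⟩ := InvLim.exists_coord_ne hxy
  rw [x.coord_eq_iterate m l, y.coord_eq_iterate m l] at hm
  obtain ⟨K, hK⟩ := hexp _ _ hm
  refine ⟨K - (m + l : ℕ), ?_⟩
  rwa [shiftEquiv_zpow_sub_apply_zero, shiftEquiv_zpow_sub_apply_zero]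

end Shift

section Dbar

variable {X : Type*} [PseudoMetricSpace X] [BoundedSpace X] {f : X → X}

lemma summable_dist_div_two_pow (x y : InvLim f) :
    Summable fun i : ℕ => dist (x.1 i) (y.1 i) / 2 ^ i := by
  obtain ⟨C, hC⟩ := Metric.boundedSpace_iff.mp ‹BoundedSpace X›
  refine (summable_geometric_two.mul_left C).of_nonneg_of_le (fun i => by positivity)
    fun i => ?_
  rw [div_pow, one_pow, mul_one_div]
  gcongr
  exact hC _ _

lemma dist_coord_zero_le_Dbar (x y : InvLim f) : dist (x.1 0) (y.1 0) ≤ Dbar f x y := by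
  simpa [Dbar] using (summable_dist_div_two_pow x y).le_tsum 0 fun j _ => by positivity

end Dbar

theorem stmt2_general {X : Type*} [MetricSpace X] [CompactSpace X]
    (f : X → X)
    (l : ℕ) (ε : ℝ) (hε : 0 < ε)
    (hexp : ∀ x y : X, f^[l] x ≠ f^[l] y → ∃ K : ℕ, ε ≤ dist (f^[K] x) (f^[K] y)) :
    ∃ ε' > (0 : ℝ), ∀ x y : InvLim f, x ≠ y →
      ∃ n : ℤ, ε' ≤ Dbar f ((shiftEquiv f ^ n) x) ((shiftEquiv f ^ n) y) := by
  refine ⟨ε, hε, fun x y hxy => ?_⟩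
  obtain ⟨n, hn⟩ := exists_le_dist_shiftEquiv_zpow_apply_zero f hexp hxy
  exact ⟨n, hn.trans (dist_coord_zero_le_Dbar _ _)⟩

/-- if there are `l` and `ε > 0` such that `f^l(x) ≠ f^l(y)` implies
`d(f^K x, f^K y) ≥ ε` for some `K ≥ 0`, then the shift map `f̄` on the inverse limit
is expansive with respect to `d̄`. -/
theorem stmt2 {X : Type*} [MetricSpace X] [CompactSpace X]
    (f : X → X) (hf : Continuous f) (hfs : Function.Surjective f)
    (l : ℕ) (ε : ℝ) (hε : 0 < ε)
    (hexp : ∀ x y : X, f^[l] x ≠ f^[l] y → ∃ K : ℕ, ε ≤ dist (f^[K] x) (f^[K] y)) :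
    ∃ ε' > (0 : ℝ), ∀ x y : InvLim f, x ≠ y →
      ∃ n : ℤ, ε' ≤ Dbar f ((shiftEquiv f ^ n) x) ((shiftEquiv f ^ n) y) :=
  stmt2_general f l ε hε hexp
end

section
/- Let g : S¹ → S¹ be defined on the unit circle (identified with ℝ/2πℤ) by g(θ) = 2θ for θ ∈ [0,π] and g(θ) = -2θ for θ ∈ [π,2π]. Then the induced shift homeomorphism ḡ on the inverse limit of (S¹, g) is not expansive. -/
open Real

/-! ### Auxiliary definitions and lemmas -/

noncomputable def xSeq (N i : ℕ) : ℝ :=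
  if i + 1 < N then π / 2 ^ i else (2 ^ N - 1) * π / 2 ^ i

noncomputable def ySeq (N i : ℕ) : ℝ :=
  if i < N then xSeq N i else (2 ^ N + 1) * π / 2 ^ i

lemma dist_coe_le (p x y : ℝ) :
    dist ((x : ℝ) : AddCircle p) ((y : ℝ) : AddCircle p) ≤ |x - y| := by
  rw [dist_eq_norm, ← AddCircle.coe_sub]
  exact QuotientAddGroup.norm_mk_le_norm.trans (le_of_eq (Real.norm_eq_abs _))

lemma shift_apply_zero {X : Type*} (f : X → X) (x : InvLim f) :
    ((shiftEquiv f) x).1 0 = f (x.1 0) := rfl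

lemma shift_apply_succ {X : Type*} (f : X → X) (x : InvLim f) (i : ℕ) :
    ((shiftEquiv f) x).1 (i + 1) = x.1 i := rfl

lemma shift_inv_apply {X : Type*} (f : X → X) (x : InvLim f) (i : ℕ) :
    ((shiftEquiv f)⁻¹ x).1 i = x.1 (i + 1) := rfl

lemma shift_inv_pow_apply {X : Type*} (f : X → X) :
    ∀ (k : ℕ) (x : InvLim f) (i : ℕ),
      (((shiftEquiv f)⁻¹ ^ k) x).1 i = x.1 (i + k)
  | 0, x, i => by rw [pow_zero]; rfl
  | (k+1), x, i => by
      rw [pow_succ, Equiv.Perm.mul_apply, shift_inv_pow_apply f k]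
      rfl

lemma one_le_two_pow' (k : ℕ) : (1 : ℝ) ≤ 2 ^ k := one_le_pow₀ (by norm_num)

lemma two_pow_mono' {a b : ℕ} (h : a ≤ b) : (2 : ℝ) ^ a ≤ 2 ^ b :=
  pow_le_pow_right₀ (by norm_num) h

lemma gx_step (g : AddCircle (2 * π) → AddCircle (2 * π))
    (hg1 : ∀ θ : ℝ, θ ∈ Set.Icc 0 π → g (θ : AddCircle (2 * π)) = ((2 * θ : ℝ) : AddCircle (2 * π)))
    (hg2 : ∀ θ : ℝ, θ ∈ Set.Icc π (2 * π) →
      g (θ : AddCircle (2 * π)) = ((-(2 * θ) : ℝ) : AddCircle (2 * π)))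
    (N i : ℕ) :
    g ((xSeq N (i+1) : ℝ) : AddCircle (2 * π)) = ((xSeq N i : ℝ) : AddCircle (2 * π)) := by
  have hpi := Real.pi_pos
  have h2i : (1 : ℝ) ≤ 2 ^ i := one_le_two_pow' i
  by_cases h1 : i + 2 < N
  · have hx1 : xSeq N (i+1) = π / 2 ^ (i+1) := if_pos (by omega)
    have hx0 : xSeq N i = π / 2 ^ i := if_pos (by omega)
    rw [hx1, hx0]
    have hmem : π / 2 ^ (i+1) ∈ Set.Icc (0:ℝ) π := by
      constructor
      · positivity
      · rw [div_le_iff₀ (by positivity)]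
        nlinarith [one_le_two_pow' (i+1)]
    rw [hg1 _ hmem]
    congr 1
    rw [pow_succ]
    ring
  · by_cases h2 : i + 1 < N
    · have hEq : N = i + 2 := by omega
      subst hEq
      have hx1 : xSeq (i+2) (i+1) = (2 ^ (i+2) - 1) * π / 2 ^ (i+1) := if_neg (by omega)
      have hx0 : xSeq (i+2) i = π / 2 ^ i := if_pos (by omega)
      rw [hx1, hx0]
      have hp1 : (2:ℝ) ^ (i+1) = 2 * 2 ^ i := by rw [pow_succ]; ring
      have hp2 : (2:ℝ) ^ (i+2) = 4 * 2 ^ i := by rw [pow_succ, pow_succ]; ring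
      have hmem : (2 ^ (i+2) - 1) * π / 2 ^ (i+1) ∈ Set.Icc π (2*π) := by
        constructor
        · rw [le_div_iff₀ (by positivity)]
          nlinarith
        · rw [div_le_iff₀ (by positivity)]
          nlinarith
      rw [hg2 _ hmem]
      have key : (π / 2 ^ i : ℝ) = -(2 * ((2 ^ (i+2) - 1) * π / 2 ^ (i+1))) + 2*π + 2*π := by
        rw [hp1, hp2]
        field_simp
        ring
      rw [key, AddCircle.coe_add_period, AddCircle.coe_add_period]
    · -- N ≤ i + 1
      have hx1 : xSeq N (i+1) = (2 ^ N - 1) * π / 2 ^ (i+1) := if_neg (by omega)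
      have hx0 : xSeq N i = (2 ^ N - 1) * π / 2 ^ i := if_neg (by omega)
      rw [hx1, hx0]
      have hpow : (2:ℝ) ^ N ≤ 2 ^ (i+1) := two_pow_mono' (by omega)
      have hN1 : (1:ℝ) ≤ 2 ^ N := one_le_two_pow' N
      have hmem : (2 ^ N - 1) * π / 2 ^ (i+1) ∈ Set.Icc (0:ℝ) π := by
        constructor
        · apply div_nonneg _ (by positivity)
          nlinarith
        · rw [div_le_iff₀ (by positivity)]
          nlinarith
      rw [hg1 _ hmem]
      congr 1
      rw [pow_succ]
      ring

lemma gy_step (g : AddCircle (2 * π) → AddCircle (2 * π))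
    (hg1 : ∀ θ : ℝ, θ ∈ Set.Icc 0 π → g (θ : AddCircle (2 * π)) = ((2 * θ : ℝ) : AddCircle (2 * π)))
    (hg2 : ∀ θ : ℝ, θ ∈ Set.Icc π (2 * π) →
      g (θ : AddCircle (2 * π)) = ((-(2 * θ) : ℝ) : AddCircle (2 * π)))
    (N i : ℕ) :
    g ((ySeq N (i+1) : ℝ) : AddCircle (2 * π)) = ((ySeq N i : ℝ) : AddCircle (2 * π)) := by
  have hpi := Real.pi_pos
  have h2i : (1 : ℝ) ≤ 2 ^ i := one_le_two_pow' i
  by_cases h1 : i + 1 < N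
  · have hy1 : ySeq N (i+1) = xSeq N (i+1) := if_pos h1
    have hy0 : ySeq N i = xSeq N i := if_pos (by omega)
    rw [hy1, hy0]
    exact gx_step g hg1 hg2 N i
  · by_cases h2 : i < N
    · -- N = i + 1
      have hEq : N = i + 1 := by omega
      subst hEq
      have hy1 : ySeq (i+1) (i+1) = (2 ^ (i+1) + 1) * π / 2 ^ (i+1) := if_neg (by omega)
      have hy0 : ySeq (i+1) i = (2 ^ (i+1) - 1) * π / 2 ^ i := by
        rw [ySeq, if_pos (by omega), xSeq, if_neg (by omega)]
      rw [hy1, hy0]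
      have hp1 : (2:ℝ) ^ (i+1) = 2 * 2 ^ i := by rw [pow_succ]; ring
      have hmem : (2 ^ (i+1) + 1) * π / 2 ^ (i+1) ∈ Set.Icc π (2*π) := by
        constructor
        · rw [le_div_iff₀ (by positivity)]
          nlinarith
        · rw [div_le_iff₀ (by positivity)]
          nlinarith
      rw [hg2 _ hmem]
      have key : ((2 ^ (i+1) - 1) * π / 2 ^ i : ℝ)
          = -(2 * ((2 ^ (i+1) + 1) * π / 2 ^ (i+1))) + 2*π + 2*π := by
        rw [hp1]
        field_simp
        ring
      rw [key, AddCircle.coe_add_period, AddCircle.coe_add_period]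
    · -- N ≤ i
      have hy1 : ySeq N (i+1) = (2 ^ N + 1) * π / 2 ^ (i+1) := if_neg (by omega)
      have hy0 : ySeq N i = (2 ^ N + 1) * π / 2 ^ i := if_neg (by omega)
      rw [hy1, hy0]
      have hpow : (2:ℝ) ^ N ≤ 2 ^ i := two_pow_mono' (by omega)
      have hmem : (2 ^ N + 1) * π / 2 ^ (i+1) ∈ Set.Icc (0:ℝ) π := by
        constructor
        · positivity
        · rw [div_le_iff₀ (by positivity), pow_succ]
          nlinarith
      rw [hg1 _ hmem]
      congr 1
      rw [pow_succ]
      ring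

/-- for the map `g` on the circle `ℝ/2πℤ` given by `θ ↦ 2θ` on `[0,π]`
and `θ ↦ -2θ` on `[π,2π]`, the induced shift homeomorphism `ḡ` on the inverse limit
of `(S¹, g)` is not expansive. -/
theorem stmt3 (g : AddCircle (2 * π) → AddCircle (2 * π))
    (hg1 : ∀ θ : ℝ, θ ∈ Set.Icc 0 π → g (θ : AddCircle (2 * π)) = ((2 * θ : ℝ) : AddCircle (2 * π)))
    (hg2 : ∀ θ : ℝ, θ ∈ Set.Icc π (2 * π) →
      g (θ : AddCircle (2 * π)) = ((-(2 * θ) : ℝ) : AddCircle (2 * π))) :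
    ¬ ∃ ε > (0 : ℝ), ∀ x y : InvLim g, x ≠ y →
        ∃ n : ℤ, ε ≤ Dbar g ((shiftEquiv g ^ n) x) ((shiftEquiv g ^ n) y) := by
  rintro ⟨ε, hε, H⟩
  have hpi := Real.pi_pos
  -- choose N
  obtain ⟨N0, hN0⟩ := exists_pow_lt_of_lt_one
    (show (0:ℝ) < ε / (4 * π) by positivity) (by norm_num : (1:ℝ)/2 < 1)
  set N := N0 + 2 with hNdef
  have hN : 2 ≤ N := by omega
  have hNε : 4 * π / 2 ^ N < ε := by
    have h1 : ((1:ℝ)/2) ^ N ≤ (1/2) ^ N0 :=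
      pow_le_pow_of_le_one (by norm_num) (by norm_num) (by omega)
    have h2 : ((1:ℝ)/2) ^ N < ε / (4*π) := lt_of_le_of_lt h1 hN0
    have h3 : 4 * π / 2 ^ N = 4 * π * ((1/2) ^ N : ℝ) := by
      rw [one_div, inv_pow, ← one_div, mul_one_div]
    rw [h3]
    calc 4 * π * ((1/2) ^ N : ℝ) < 4 * π * (ε / (4*π)) := by
          exact mul_lt_mul_of_pos_left h2 (by positivity)
      _ = ε := by field_simp
  -- the two points
  let xx : InvLim g := ⟨fun i => ((xSeq N i : ℝ) : AddCircle (2*π)),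
    fun i => gx_step g hg1 hg2 N i⟩
  let yy : InvLim g := ⟨fun i => ((ySeq N i : ℝ) : AddCircle (2*π)),
    fun i => gy_step g hg1 hg2 N i⟩
  have h2N : (1:ℝ) ≤ 2 ^ N := one_le_two_pow' N
  have h2Npos : (0:ℝ) < 2 ^ N := by positivity
  have h2Nbig : (2:ℝ) ≤ 2 ^ N := by
    calc (2:ℝ) = 2 ^ 1 := (pow_one 2).symm
      _ ≤ 2 ^ N := two_pow_mono' (by omega)
  -- distinctness
  have hne : xx ≠ yy := by
    intro h
    have hcoord : ((xSeq N N : ℝ) : AddCircle (2*π)) = ((ySeq N N : ℝ) : AddCircle (2*π)) :=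
      congrFun (congrArg Subtype.val h) N
    have hxN : xSeq N N = (2 ^ N - 1) * π / 2 ^ N := if_neg (by omega)
    have hyN : ySeq N N = (2 ^ N + 1) * π / 2 ^ N := if_neg (by omega)
    haveI : Fact (0 < 2 * π) := ⟨by positivity⟩
    rw [hxN, hyN] at hcoord
    rw [AddCircle.coe_eq_coe_iff_of_mem_Ico (a := 0)
      (by constructor
          · apply div_nonneg _ (le_of_lt h2Npos); nlinarith
          · rw [zero_add, div_lt_iff₀ h2Npos]; nlinarith)
      (by constructor
          · positivity
          · rw [zero_add, div_lt_iff₀ h2Npos]; nlinarith)] at hcoord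
    have h' : (2:ℝ) ^ N - 1 = 2 ^ N + 1 := by
      field_simp at hcoord
      linarith
    linarith
  -- pointwise distance bound on coordinates
  have hd : ∀ i, dist (xx.1 i) (yy.1 i) ≤ 2 * π / 2 ^ N := by
    intro i
    by_cases hi : i < N
    · have : ySeq N i = xSeq N i := if_pos hi
      show dist ((xSeq N i : ℝ) : AddCircle (2*π)) ((ySeq N i : ℝ) : AddCircle (2*π)) ≤ _
      rw [this, dist_self]
      positivity
    · have hxN : xSeq N i = (2 ^ N - 1) * π / 2 ^ i := if_neg (by omega)
      have hyN : ySeq N i = (2 ^ N + 1) * π / 2 ^ i := if_neg (by omega)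
      calc dist (xx.1 i) (yy.1 i) ≤ |xSeq N i - ySeq N i| := dist_coe_le _ _ _
        _ = 2 * π / 2 ^ i := by
            rw [abs_eq (by positivity)]
            right
            rw [hxN, hyN]
            ring
        _ ≤ 2 * π / 2 ^ N := by
            apply div_le_div_of_nonneg_left (by positivity) h2Npos
            exact two_pow_mono' (by omega)
  -- head equality
  have hhead : xx.1 0 = yy.1 0 := by
    show ((xSeq N 0 : ℝ) : AddCircle (2*π)) = ((ySeq N 0 : ℝ) : AddCircle (2*π))
    rw [show ySeq N 0 = xSeq N 0 from if_pos (by omega)]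
  -- forward shifts
  have key : ∀ m : ℕ, (((shiftEquiv g) ^ m) xx).1 0 = (((shiftEquiv g) ^ m) yy).1 0 ∧
      ∀ i, dist ((((shiftEquiv g) ^ m) xx).1 i) ((((shiftEquiv g) ^ m) yy).1 i)
        ≤ 2 * π / 2 ^ N := by
    intro m
    induction m with
    | zero =>
        rw [pow_zero]
        exact ⟨hhead, hd⟩
    | succ m ih =>
        rw [pow_succ']
        constructor
        · rw [Equiv.Perm.mul_apply, Equiv.Perm.mul_apply,
            shift_apply_zero, shift_apply_zero, ih.1]
        · intro i
          rw [Equiv.Perm.mul_apply, Equiv.Perm.mul_apply]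
          cases i with
          | zero =>
              rw [shift_apply_zero, shift_apply_zero, ih.1, dist_self]
              positivity
          | succ i =>
              rw [shift_apply_succ, shift_apply_succ]
              exact ih.2 i
  -- all integer shifts
  have main : ∀ n : ℤ, ∀ i,
      dist (((shiftEquiv g ^ n) xx).1 i) (((shiftEquiv g ^ n) yy).1 i) ≤ 2 * π / 2 ^ N := by
    intro n i
    cases n with
    | ofNat m =>
        have hz : (shiftEquiv g) ^ (Int.ofNat m) = (shiftEquiv g) ^ m := zpow_natCast _ m
        rw [hz]
        exact (key m).2 i
    | negSucc m =>
        rw [zpow_negSucc, ← inv_pow, shift_inv_pow_apply, shift_inv_pow_apply]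
        exact hd (i + (m+1))
  -- Dbar bound
  have hDbar : ∀ n : ℤ, Dbar g ((shiftEquiv g ^ n) xx) ((shiftEquiv g ^ n) yy)
      ≤ 4 * π / 2 ^ N := by
    intro n
    set z := (shiftEquiv g ^ n) xx
    set w := (shiftEquiv g ^ n) yy
    have hb := main n
    have hle : ∀ i, dist (z.1 i) (w.1 i) / 2 ^ i ≤ (2 * π / 2 ^ N) * (1/2) ^ i := by
      intro i
      have h2 : (2 * π / 2 ^ N) * ((1:ℝ)/2) ^ i = (2 * π / 2 ^ N) / 2 ^ i := by
        rw [one_div, inv_pow, ← one_div, mul_one_div]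
      rw [h2]
      exact div_le_div_of_nonneg_right (hb i) (by positivity)
    have hsum2 : Summable (fun i : ℕ => (2 * π / 2 ^ N) * ((1:ℝ)/2) ^ i) :=
      summable_geometric_two.mul_left _
    have hs : Summable (fun i : ℕ => dist (z.1 i) (w.1 i) / 2 ^ i) :=
      Summable.of_nonneg_of_le (fun i => by positivity) hle hsum2
    calc Dbar g z w ≤ ∑' i : ℕ, (2 * π / 2 ^ N) * ((1:ℝ)/2) ^ i :=
          Summable.tsum_le_tsum hle hs hsum2
      _ = (2 * π / 2 ^ N) * 2 := by rw [tsum_mul_left, tsum_geometric_two]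
      _ = 4 * π / 2 ^ N := by ring
  obtain ⟨n, hn⟩ := H xx yy hne
  have := hDbar n
  linarith
end

section
/- Let A and B be square matrices over ℤ (of sizes n and m) such that there exist integer matrices R (n×m) and S (m×n) with A = RS and B = SR. Then coker(I_n − A) ≅ coker(I_m − B) as abelian groups. -/
/-! Since `(1 - R S) R = R (1 - S R)` and `(1 - S R) S = S (1 - R S)`, right multiplication by `R`
and by `S` descends to maps between the two cokernels. Their composites are right
multiplication by `R S` and `S R`, which act as the identity on `coker (1 - R S)` and
`coker (1 - S R)` because `x - x A = x (1 - A)`. -/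

open Matrix

variable {K ι κ : Type*} [CommRing K] [Fintype ι] [Fintype κ]

namespace Matrix

noncomputable def cokerVecMul (P : Matrix ι ι K) (Q : Matrix κ κ K) (M : Matrix ι κ K)
    (h : P * M = M * Q) :
    ((ι → K) ⧸ LinearMap.range P.vecMulLinear) →ₗ[K]
      ((κ → K) ⧸ LinearMap.range Q.vecMulLinear) :=
  Submodule.mapQ _ _ M.vecMulLinear <| by
    rintro _ ⟨y, rfl⟩
    exact ⟨y ᵥ* M, by simp [vecMul_vecMul, h]⟩

theorem cokerVecMul_mk (P : Matrix ι ι K) (Q : Matrix κ κ K) (M : Matrix ι κ K)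
    (h : P * M = M * Q) (x : ι → K) :
    cokerVecMul P Q M h (Submodule.Quotient.mk x) = Submodule.Quotient.mk (x ᵥ* M) :=
  rfl

theorem mk_vecMul_eq_mk_of_coker_one_sub [DecidableEq ι] (A : Matrix ι ι K) (x : ι → K) :
    (Submodule.Quotient.mk (x ᵥ* A) : (ι → K) ⧸ LinearMap.range (1 - A).vecMulLinear) =
      Submodule.Quotient.mk x := by
  rw [Submodule.Quotient.eq]
  exact ⟨-x, by simp [neg_add_eq_sub]⟩

theorem one_sub_mul_mul_comm [DecidableEq ι] [DecidableEq κ] (R : Matrix ι κ K)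
    (S : Matrix κ ι K) : (1 - R * S) * R = R * (1 - S * R) := by
  simp only [Matrix.sub_mul, Matrix.mul_sub, Matrix.one_mul, Matrix.mul_one, Matrix.mul_assoc]

noncomputable def cokerOneSubMulEquiv [DecidableEq ι] [DecidableEq κ] (R : Matrix ι κ K)
    (S : Matrix κ ι K) :
    ((ι → K) ⧸ LinearMap.range (1 - R * S).vecMulLinear) ≃ₗ[K]
      ((κ → K) ⧸ LinearMap.range (1 - S * R).vecMulLinear) :=
  LinearEquiv.ofLinearMap (cokerVecMul _ _ R (one_sub_mul_mul_comm R S))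
    (cokerVecMul _ _ S (one_sub_mul_mul_comm S R))
    (Submodule.linearMap_qext _ <| LinearMap.ext fun y => by
      simp [cokerVecMul_mk, vecMul_vecMul, mk_vecMul_eq_mk_of_coker_one_sub])
    (Submodule.linearMap_qext _ <| LinearMap.ext fun x => by
      simp [cokerVecMul_mk, vecMul_vecMul, mk_vecMul_eq_mk_of_coker_one_sub])

end Matrix

/-- if `A = RS` and `B = SR` for integer matrices `R : n×m`, `S : m×n`,
then the cokernels of `I − A` and `I − B` (acting on row vectors) are isomorphic
abelian groups (invariance of the Bowen-Franks group under elementary strong shift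
equivalence). -/
theorem stmt12 {n m : ℕ} (A : Matrix (Fin n) (Fin n) ℤ) (B : Matrix (Fin m) (Fin m) ℤ)
    (R : Matrix (Fin n) (Fin m) ℤ) (S : Matrix (Fin m) (Fin n) ℤ)
    (hA : A = R * S) (hB : B = S * R) :
    Nonempty
      (((Fin n → ℤ) ⧸ LinearMap.range (Matrix.vecMulLinear (1 - A))) ≃+
       ((Fin m → ℤ) ⧸ LinearMap.range (Matrix.vecMulLinear (1 - B)))) := by
  subst hA hB
  exact ⟨(cokerOneSubMulEquiv R S).toAddEquiv⟩
end

section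
/- Let M = [[0,1,1,0],[0,0,0,1],[1,0,0,2],[1,1,1,1]] be the adjacency matrix of a one-sided edge shift of finite type. Its total column amalgamation is the 3×3 matrix [[0,1,0],[1,0,3],[1,1,1]]. Since the 3×3 matrix N = [[0,2,1],[1,0,1],[2,0,1]] is its own total column amalgamation and [[0,1,0],[1,0,3],[1,1,1]] ≠ N (in particular their entry multisets differ), the one-sided SFTs defined by M and N are not topologically conjugate, even though M and N are elementary strong shift equivalent (M = SR, N = RS for suitable nonnegative integer R, S). -/
/-- The alphabet of the edge shift of a nonnegative integer matrix `A`. -/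
def EdgeAlphabet {r : ℕ} (A : Matrix (Fin r) (Fin r) ℕ) : Type :=
  Σ i j : Fin r, Fin (A i j)

instance {r : ℕ} (A : Matrix (Fin r) (Fin r) ℕ) : TopologicalSpace (EdgeAlphabet A) := ⊥

/-- The one-sided edge shift of finite type of `A`: one-sided infinite edge paths. -/
def OneSidedEdgeShift {r : ℕ} (A : Matrix (Fin r) (Fin r) ℕ) : Type :=
  {x : ℕ → EdgeAlphabet A // ∀ n, (x n).2.1 = (x (n + 1)).1}

instance {r : ℕ} (A : Matrix (Fin r) (Fin r) ℕ) : TopologicalSpace (OneSidedEdgeShift A) :=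
  inferInstanceAs (TopologicalSpace {x : ℕ → EdgeAlphabet A // ∀ n, (x n).2.1 = (x (n + 1)).1})

/-- The (one-sided) shift map. -/
def oneSidedShiftMap {r : ℕ} (A : Matrix (Fin r) (Fin r) ℕ) (x : OneSidedEdgeShift A) :
    OneSidedEdgeShift A :=
  ⟨fun n => x.1 (n + 1), fun n => x.2 (n + 1)⟩

def Mm : Matrix (Fin 4) (Fin 4) ℕ := !![0,1,1,0;0,0,0,1;1,0,0,2;1,1,1,1]
def Nm : Matrix (Fin 3) (Fin 3) ℕ := !![0,2,1;1,0,1;2,0,1]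

instance instFintypeNmSigma1 (i : Fin 3) : Fintype (Σ j : Fin 3, Fin (Nm i j)) := Sigma.instFintype
instance instFintypeNmSigma : Fintype (Σ i j : Fin 3, Fin (Nm i j)) := Sigma.instFintype

/-- Prepend an edge to a path. -/
def econs {r : ℕ} {A : Matrix (Fin r) (Fin r) ℕ} (e : EdgeAlphabet A)
    (x : OneSidedEdgeShift A) (h : e.2.1 = (x.1 0).1) : OneSidedEdgeShift A :=
  ⟨fun n => Nat.casesOn n e (fun m => x.1 m),
   fun n => Nat.casesOn n h (fun m => x.2 m)⟩

lemma shift_econs {r : ℕ} {A : Matrix (Fin r) (Fin r) ℕ} (e : EdgeAlphabet A)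
    (x : OneSidedEdgeShift A) (h : e.2.1 = (x.1 0).1) :
    oneSidedShiftMap A (econs e x h) = x := Subtype.ext rfl

/-- The unique fixed point of the M-shift. -/
def pM : OneSidedEdgeShift Mm := ⟨fun _ => ⟨3, 3, ⟨0, by decide⟩⟩, fun _ => rfl⟩

/-- The unique fixed point of the N-shift. -/
def qN : OneSidedEdgeShift Nm := ⟨fun _ => ⟨2, 2, ⟨0, by decide⟩⟩, fun _ => rfl⟩

lemma fixN_unique (y : OneSidedEdgeShift Nm) (hy : oneSidedShiftMap Nm y = y) : y = qN := by
  have h1 : ∀ n, y.1 (n + 1) = y.1 n := fun n => congrFun (congrArg Subtype.val hy) n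
  have h0 : ∀ n, y.1 n = y.1 0 := by
    intro n; induction n with
    | zero => rfl
    | succ m ih => rw [h1 m, ih]
  have hself : (y.1 0).2.1 = (y.1 0).1 := by
    have := y.2 0; rwa [h0 1] at this
  have key : ∀ e : Σ i j : Fin 3, Fin (Nm i j), e.2.1 = e.1 →
      e = (⟨2, 2, ⟨0, by decide⟩⟩ : Σ i j : Fin 3, Fin (Nm i j)) := by decide +kernel
  have h02 : y.1 0 = (⟨2, 2, ⟨0, by decide⟩⟩ : Σ i j : Fin 3, Fin (Nm i j)) :=
    key (y.1 0) hself
  apply Subtype.ext; funext n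
  rw [h0 n]; exact h02

/-- The four edges of M ending at vertex 3. -/
def eM : Fin 4 → Σ i j : Fin 4, Fin (Mm i j)
  | 0 => ⟨1, 3, ⟨0, by decide⟩⟩
  | 1 => ⟨2, 3, ⟨0, by decide⟩⟩
  | 2 => ⟨2, 3, ⟨1, by decide⟩⟩
  | 3 => ⟨3, 3, ⟨0, by decide⟩⟩

lemma eM_snd (k : Fin 4) : (eM k).2.1 = (pM.1 0).1 := by fin_cases k <;> rfl

lemma eM_inj : Function.Injective eM := by
  have : ∀ k j : Fin 4, eM k = eM j → k = j := by decide
  exact fun k j h => this k j h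

/-- with `R = [[0,1,1,0],[0,0,0,1],[1,0,0,1]]` and
`S = [[1,0,0],[0,1,0],[0,1,1],[1,0,1]]` one has `N = R·S` and `M = S·R`
(`M`, `N` are elementary strong shift equivalent), yet the one-sided edge shifts
defined by `M = [[0,1,1,0],[0,0,0,1],[1,0,0,2],[1,1,1,1]]` and
`N = [[0,2,1],[1,0,1],[2,0,1]]` are not topologically conjugate (their total column
amalgamations, `[[0,1,0],[1,0,3],[1,1,1]]` and `N` itself, differ). -/
theorem stmt16 :
    (!![0, 2, 1; 1, 0, 1; 2, 0, 1] : Matrix (Fin 3) (Fin 3) ℕ) =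
      (!![0, 1, 1, 0; 0, 0, 0, 1; 1, 0, 0, 1] : Matrix (Fin 3) (Fin 4) ℕ) *
      (!![1, 0, 0; 0, 1, 0; 0, 1, 1; 1, 0, 1] : Matrix (Fin 4) (Fin 3) ℕ) ∧
    (!![0, 1, 1, 0; 0, 0, 0, 1; 1, 0, 0, 2; 1, 1, 1, 1] : Matrix (Fin 4) (Fin 4) ℕ) =
      (!![1, 0, 0; 0, 1, 0; 0, 1, 1; 1, 0, 1] : Matrix (Fin 4) (Fin 3) ℕ) *
      (!![0, 1, 1, 0; 0, 0, 0, 1; 1, 0, 0, 1] : Matrix (Fin 3) (Fin 4) ℕ) ∧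
    (!![0, 1, 0; 1, 0, 3; 1, 1, 1] : Matrix (Fin 3) (Fin 3) ℕ) ≠
      (!![0, 2, 1; 1, 0, 1; 2, 0, 1] : Matrix (Fin 3) (Fin 3) ℕ) ∧
    ¬ ∃ φ : OneSidedEdgeShift (!![0, 1, 1, 0; 0, 0, 0, 1; 1, 0, 0, 2; 1, 1, 1, 1] :
              Matrix (Fin 4) (Fin 4) ℕ) ≃ₜ
            OneSidedEdgeShift (!![0, 2, 1; 1, 0, 1; 2, 0, 1] : Matrix (Fin 3) (Fin 3) ℕ),
        ∀ x, φ (oneSidedShiftMap _ x) = oneSidedShiftMap _ (φ x) := by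
  refine ⟨by decide, by decide, by decide, ?_⟩
  rintro ⟨φ, hφ⟩
  -- the matrices in the statement are definitionally Mm and Nm
  have hφ' : ∀ x : OneSidedEdgeShift Mm,
      φ (oneSidedShiftMap Mm x) = oneSidedShiftMap Nm (φ x) := hφ
  -- φ pM is a fixed point of the N-shift, hence equals qN
  have hpM : oneSidedShiftMap Mm pM = pM := Subtype.ext rfl
  have hfix : oneSidedShiftMap Nm (φ pM) = φ pM := by
    rw [← hφ' pM, hpM]
  have hφp : φ pM = qN := fixN_unique _ hfix
  -- the four preimages of pM
  let Y : Fin 4 → OneSidedEdgeShift Mm := fun k => econs (eM k) pM (eM_snd k)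
  have hY : ∀ k, oneSidedShiftMap Mm (Y k) = pM := fun k => shift_econs _ _ _
  have hZ : ∀ k, oneSidedShiftMap Nm (φ (Y k)) = qN := by
    intro k; rw [← hφ' (Y k), hY k, hφp]
  -- each φ (Y k) is determined by its 0th edge, which ends at vertex 2
  have htail : ∀ k n, (φ (Y k)).1 (n + 1) = qN.1 n := by
    intro k n; exact congrFun (congrArg Subtype.val (hZ k)) n
  have hend : ∀ k, ((φ (Y k)).1 0).2.1 = (2 : Fin 3) := by
    intro k
    have := (φ (Y k)).2 0
    rw [htail k 0] at this
    exact this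
  let T := {e : Σ i j : Fin 3, Fin (Nm i j) // e.2.1 = 2}
  let f : Fin 4 → T := fun k => ⟨(φ (Y k)).1 0, hend k⟩
  have hf : Function.Injective f := by
    intro k j h
    have h0 : (φ (Y k)).1 0 = (φ (Y j)).1 0 := congrArg Subtype.val h
    have hYY : φ (Y k) = φ (Y j) := by
      apply Subtype.ext; funext n
      cases n with
      | zero => exact h0
      | succ m => rw [htail k m, htail j m]
    have := φ.injective hYY
    apply eM_inj
    have : (Y k).1 0 = (Y j).1 0 := congrFun (congrArg Subtype.val this) 0
    exact this
  have hcard : Fintype.card T = 3 := by decide +kernel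
  have := Fintype.card_le_of_injective f hf
  rw [hcard] at this
  simp at this
end
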